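/- arXiv:1508.05351 — 4 statements merged into one kernel-verified Lean document; each statement's English description precedes it below -/
import Mathlib

section
/- For every natural number k ≥ 0, ∑_{i=0}^{2k} max(i, 2k − i)·binom(2k, i)·(1/2)^{2k} = k + k·binom(2k, k)·(1/2)^{2k}. -/
/-!
Since `2 * max i (n - i) = n + |n - 2 i|`, the sum splits into `n 2ⁿ` and the mean absolute
deviation `∑ |n - 2 i| C(n, i)`. The latter telescopes on each side of `n / 2`, because
`(n - 2 i) C(n, i) = (i + 1) C(n, i + 1) - i C(n, i)`.
-/

open Finset

section

variable {R : Type*} [CommRing R]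

theorem sub_mul_choose_eq_succ_mul_choose_succ (n i : ℕ) :
    ((n : R) - i) * n.choose i = (i + 1) * n.choose (i + 1) := by
  rcases le_or_gt i n with hi | hi
  · have h := congrArg (Nat.cast : ℕ → R) (Nat.choose_succ_right_eq n i)
    push_cast [hi] at h
    linear_combination -h
  · simp [Nat.choose_eq_zero_of_lt hi, Nat.choose_eq_zero_of_lt (Nat.lt_succ_of_lt hi)]

theorem sum_Ico_sub_two_mul_mul_choose (n : ℕ) {a b : ℕ} (hab : a ≤ b) :
    ∑ i ∈ Ico a b, ((n : R) - 2 * i) * n.choose i = b * n.choose b - a * n.choose a := by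
  rw [← sum_Ico_sub (fun i ↦ (i : R) * n.choose i) hab]
  refine sum_congr rfl fun i _ ↦ ?_
  push_cast
  linear_combination sub_mul_choose_eq_succ_mul_choose_succ (R := R) n i

variable [LinearOrder R] [IsStrictOrderedRing R]

theorem sum_range_abs_sub_two_mul_mul_choose (n : ℕ) :
    ∑ i ∈ range (n + 1), |(n : R) - 2 * i| * n.choose i
      = 2 * ((n + 1) / 2 : ℕ) * n.choose ((n + 1) / 2) := by
  set m := (n + 1) / 2
  have hm : m ≤ n + 1 := by omega
  have lower : ∀ i ∈ range m, |(n : R) - 2 * i| * n.choose i = (n - 2 * i) * n.choose i :=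
    fun i hi ↦ by
      have : (2 * i : R) ≤ n := by exact_mod_cast (by grind : 2 * i ≤ n)
      rw [abs_of_nonneg (sub_nonneg.mpr this)]
  have upper : ∀ i ∈ Ico m (n + 1),
      |(n : R) - 2 * i| * n.choose i = -((n - 2 * i) * n.choose i) := fun i hi ↦ by
    have : (n : R) ≤ 2 * i := by exact_mod_cast (by grind : n ≤ 2 * i)
    rw [abs_of_nonpos (sub_nonpos.mpr this), neg_mul]
  rw [← sum_range_add_sum_Ico _ hm, sum_congr rfl lower, sum_congr rfl upper, sum_neg_distrib,
    range_eq_Ico, sum_Ico_sub_two_mul_mul_choose n (Nat.zero_le m),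
    sum_Ico_sub_two_mul_mul_choose n hm, Nat.choose_succ_self]
  push_cast
  ring

theorem two_mul_cast_max_sub {n i : ℕ} (hi : i ≤ n) :
    2 * ((max i (n - i) : ℕ) : R) = n + |(n : R) - 2 * i| := by
  rw [Nat.cast_max, Nat.cast_sub hi]
  rcases le_total (2 * i) n with h | h
  · have h' : (2 * i : R) ≤ n := by exact_mod_cast h
    rw [max_eq_right (by linarith), abs_of_nonneg (by linarith)]
    ring
  · have h' : (n : R) ≤ 2 * i := by exact_mod_cast h
    rw [max_eq_left (by linarith), abs_of_nonpos (by linarith)]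
    ring

theorem two_mul_sum_range_max_mul_choose (n : ℕ) :
    2 * ∑ i ∈ range (n + 1), ((max i (n - i) : ℕ) : R) * n.choose i
      = n * 2 ^ n + 2 * ((n + 1) / 2 : ℕ) * n.choose ((n + 1) / 2) := by
  have hmax : ∀ i ∈ range (n + 1), 2 * (((max i (n - i) : ℕ) : R) * n.choose i)
      = n * n.choose i + |(n : R) - 2 * i| * n.choose i := fun i hi ↦ by
    rw [← mul_assoc, two_mul_cast_max_sub (Nat.lt_succ_iff.mp (mem_range.mp hi)), add_mul]
  rw [mul_sum, sum_congr rfl hmax, sum_add_distrib, ← mul_sum,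
    sum_range_abs_sub_two_mul_mul_choose, ← Nat.cast_sum, Nat.sum_range_choose, Nat.cast_pow,
    Nat.cast_ofNat]

end

/-- Expected value of `max(i, 2k − i)` for `i` binomial(2k, 1/2): the even case. -/
theorem expected_max_binomial_even (k : ℕ) :
    ∑ i ∈ Finset.range (2 * k + 1),
        ((max i (2 * k - i) : ℕ) : ℚ) * ((2 * k).choose i : ℚ) * (1/2) ^ (2 * k)
      = (k : ℚ) + (k : ℚ) * ((2 * k).choose k : ℚ) * (1/2) ^ (2 * k) := by
  have h := two_mul_sum_range_max_mul_choose (R := ℚ) (2 * k)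
  rw [show (2 * k + 1) / 2 = k by omega, Nat.cast_mul, Nat.cast_ofNat] at h
  have hpow : (2 : ℚ) ^ (2 * k) * (1 / 2) ^ (2 * k) = 1 := by rw [← mul_pow]; norm_num
  rw [← sum_mul]
  linear_combination (1 / 2 * (1 / 2 : ℚ) ^ (2 * k)) * h + k * hpow
end

section
/- For every natural number k ≥ 0, ∑_{i=0}^{2k+1} max(i, 2k+1 − i)·binom(2k+1, i)·(1/2)^{2k+1} = (2k+1)/2 + ((2k+1)/2)·binom(2k, k)·(1/2)^{2k}. -/
/-!
Write `n = 2k+1`. On the lower half `i ≤ k` the maximum is `n - i`, and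
`(n - i) * C(n, i) = n * C(2k, i)`; on the upper half `i = k + 1 + j` it is `i`, and
`i * C(n, i) = n * C(2k, k + j)`. The two halves together cover every `C(2k, i)` once and the
middle coefficient `C(2k, k)` twice, so the unnormalised sum is `n * (2^(2k) + C(2k, k))`.
-/

open Finset

theorem Nat.sub_mul_choose_succ (n i : ℕ) :
    (n + 1 - i) * (n + 1).choose i = (n + 1) * n.choose i := by
  rw [mul_comm, ← Nat.choose_mul_succ_eq, mul_comm]

theorem Finset.sum_range_succ_add_sum_range_add {M : Type*} [AddCommMonoid M] (f : ℕ → M)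
    (m n : ℕ) :
    ∑ i ∈ range (m + 1), f i + ∑ j ∈ range n, f (m + j) = ∑ i ∈ range (m + n), f i + f m := by
  rw [sum_range_add f m n, sum_range_succ f m]
  abel

theorem Nat.sum_range_max_mul_choose_odd (k : ℕ) :
    ∑ i ∈ range (2 * k + 2), max i (2 * k + 1 - i) * (2 * k + 1).choose i
      = (2 * k + 1) * (2 ^ (2 * k) + (2 * k).choose k) := by
  have lower : ∀ i ∈ range (k + 1),
      max i (2 * k + 1 - i) * (2 * k + 1).choose i = (2 * k + 1) * (2 * k).choose i := by
    intro i hi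
    rw [max_eq_right (by grind), Nat.sub_mul_choose_succ]
  have upper : ∀ j ∈ range (k + 1),
      max (k + 1 + j) (2 * k + 1 - (k + 1 + j)) * (2 * k + 1).choose (k + 1 + j)
        = (2 * k + 1) * (2 * k).choose (k + j) := by
    intro j _
    rw [max_eq_left (by omega), show k + 1 + j = k + j + 1 by omega, Nat.add_one_mul_choose_eq,
      mul_comm]
  rw [show 2 * k + 2 = (k + 1) + (k + 1) by omega, sum_range_add, sum_congr rfl lower,
    sum_congr rfl upper, ← mul_sum, ← mul_sum, ← mul_add, sum_range_succ_add_sum_range_add,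
    show k + (k + 1) = 2 * k + 1 by omega, Nat.sum_range_choose]

/-- Expected value of `max(i, 2k+1 − i)` for `i` binomial(2k+1, 1/2): the odd case. -/
theorem expected_max_binomial_odd (k : ℕ) :
    ∑ i ∈ Finset.range (2 * k + 2),
        ((max i (2 * k + 1 - i) : ℕ) : ℚ) * ((2 * k + 1).choose i : ℚ) * (1/2) ^ (2 * k + 1)
      = (2 * (k : ℚ) + 1) / 2 + ((2 * (k : ℚ) + 1) / 2) * ((2 * k).choose k : ℚ) * (1/2) ^ (2 * k) := by
  have key := congrArg (Nat.cast : ℕ → ℚ) (Nat.sum_range_max_mul_choose_odd k)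
  simp only [Nat.cast_sum, Nat.cast_mul, Nat.cast_add, Nat.cast_pow, Nat.cast_ofNat,
    Nat.cast_one] at key
  rw [← sum_mul, key, one_div, inv_pow, inv_pow]
  field_simp
  ring
end

section
/- The series ∑_{n=0}^∞ [ ∑_{i=0}^{n} max(i, n − i)·binom(n, i)·(1/2)^{n} ]·(1/3)·(2/3)^{n} converges and its sum equals 1 + √5/5. (This is the expected run length of consecutive empty center sites in the three-site parking model with screening.) -/
/-!
Writing `max i (n - i) = i + (n - 2i)` (truncated subtraction), the inner sum is
`n 2ⁿ⁻¹ + ∑_{i < ⌈n/2⌉} (n - 2i) binom(n, i)`, and the second sum telescopes to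
`⌈n/2⌉ binom(n, ⌈n/2⌉)` because `(i + 1) binom(n, i + 1) = (n - i) binom(n, i)`.
The first part contributes `∑ n (2/3)ⁿ / 6 = 1`. Split by parity, the second part is
`5/6 ∑ m binom(2m, m) 9⁻ᵐ`. This is read off the generating function
`∑ binom(2m, m) xᵐ = (1 - 4x)^(-1/2)`, whose square is `∑ 4ⁿ xⁿ` by the convolution identity
`∑_{i + j = n} binom(2i, i) binom(2j, j) = 4ⁿ`, together with the recurrence
`(m + 1) binom(2m + 2, m + 1) = 2 (2m + 1) binom(2m, m)`.
-/

open Finset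

namespace Nat

theorem two_mul_sum_antidiagonal_fst_mul {R : Type*} [CommSemiring R] (f : ℕ → R) (n : ℕ) :
    2 * ∑ p ∈ antidiagonal n, (p.1 : R) * (f p.1 * f p.2)
      = n * ∑ p ∈ antidiagonal n, f p.1 * f p.2 := by
  have hswap : ∑ p ∈ antidiagonal n, (p.2 : R) * (f p.1 * f p.2)
      = ∑ p ∈ antidiagonal n, (p.1 : R) * (f p.1 * f p.2) := by
    rw [← Finset.Nat.sum_antidiagonal_swap]
    exact sum_congr rfl fun p _ => by simp only [Prod.fst_swap, Prod.snd_swap]; ring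
  calc 2 * ∑ p ∈ antidiagonal n, (p.1 : R) * (f p.1 * f p.2)
      = ∑ p ∈ antidiagonal n, ((p.1 : R) * (f p.1 * f p.2) + p.2 * (f p.1 * f p.2)) := by
        rw [sum_add_distrib, hswap, two_mul]
    _ = n * ∑ p ∈ antidiagonal n, f p.1 * f p.2 := by
        rw [mul_sum]
        refine sum_congr rfl fun p hp => ?_
        rw [← add_mul, ← mem_antidiagonal.mp hp, cast_add]

theorem sum_antidiagonal_centralBinom_mul_centralBinom (n : ℕ) :
    ∑ p ∈ antidiagonal n, centralBinom p.1 * centralBinom p.2 = 4 ^ n := by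
  induction n with
  | zero => simp
  | succ n ih =>
    have hS := two_mul_sum_antidiagonal_fst_mul centralBinom n
    have hS' := two_mul_sum_antidiagonal_fst_mul centralBinom (n + 1)
    simp only [cast_id] at hS hS'
    rw [Finset.Nat.sum_antidiagonal_succ] at hS'
    simp only [zero_mul, zero_add, ← mul_assoc, succ_mul_centralBinom_succ] at hS'
    refine Nat.eq_of_mul_eq_mul_left (Nat.succ_pos n) ?_
    rw [← hS', pow_succ]
    calc 2 * ∑ p ∈ antidiagonal n, 2 * (2 * p.1 + 1) * centralBinom p.1 * centralBinom p.2
        = 4 * (2 * ∑ p ∈ antidiagonal n, p.1 * (centralBinom p.1 * centralBinom p.2))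
          + 4 * ∑ p ∈ antidiagonal n, centralBinom p.1 * centralBinom p.2 := by
          simp only [mul_sum, ← sum_add_distrib]
          exact sum_congr rfl fun p _ => by ring
      _ = (n + 1) * (4 ^ n * 4) := by rw [hS, ih]; ring

theorem sum_range_sub_two_mul_mul_choose {n M : ℕ} (hM : 2 * M ≤ n + 1) :
    ∑ i ∈ range M, (n - 2 * i) * n.choose i = M * n.choose M := by
  induction M with
  | zero => simp
  | succ M ih =>
    rw [sum_range_succ, ih (by omega), ← add_mul, mul_comm (M + 1), choose_succ_right_eq, mul_comm]
    congr 1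
    omega

theorem two_mul_sum_range_max_mul_choose (n : ℕ) :
    2 * ∑ i ∈ range (n + 1), max i (n - i) * n.choose i
      = n * 2 ^ n + 2 * ((n + 1) / 2 * n.choose ((n + 1) / 2)) := by
  have hmax : ∀ i ∈ range (n + 1), max i (n - i) * n.choose i
      = i * n.choose i + (n - 2 * i) * n.choose i := by
    intro i hi
    rw [← add_mul]
    congr 1
    have := mem_range.mp hi
    omega
  have htail : ∑ i ∈ range (n + 1), (n - 2 * i) * n.choose i
      = ∑ i ∈ range ((n + 1) / 2), (n - 2 * i) * n.choose i := by
    refine (sum_subset (range_subset_range.mpr (by omega)) fun i _ hi => ?_).symm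
    rw [mem_range] at hi
    rw [show n - 2 * i = 0 by omega, zero_mul]
  have hid : 2 * ∑ i ∈ range (n + 1), i * n.choose i = n * 2 ^ n := by
    rw [sum_range_mul_choose]
    rcases n with _ | n
    · simp
    · rw [add_tsub_cancel_right, pow_succ]
      ring
  rw [sum_congr rfl hmax, sum_add_distrib, mul_add, hid, htail,
    sum_range_sub_two_mul_mul_choose (by omega)]

theorem two_mul_choose_succ_eq_centralBinom (k : ℕ) :
    2 * (2 * k + 1).choose (k + 1) = centralBinom (k + 1) := by
  rw [centralBinom_eq_two_mul_choose, show 2 * (k + 1) = 2 * k + 1 + 1 by ring,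
    choose_succ_succ (2 * k + 1) k, choose_symm_half]
  ring

end Nat

section CentralBinomSeries

variable {x : ℝ}

theorem summable_centralBinom_mul_pow (hx₀ : 0 ≤ x) (hx : x < 1 / 4) :
    Summable fun m => (m.centralBinom : ℝ) * x ^ m := by
  refine (summable_geometric_of_lt_one (by positivity) (by linarith : 4 * x < 1)).of_nonneg_of_le
    (fun m => by positivity) fun m => ?_
  rw [mul_pow]
  gcongr
  exact_mod_cast m.centralBinom_le_four_pow

theorem hasSum_centralBinom_mul_pow (hx₀ : 0 ≤ x) (hx : x < 1 / 4) :
    HasSum (fun m => (m.centralBinom : ℝ) * x ^ m) (√(1 - 4 * x))⁻¹ := by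
  have hs := summable_centralBinom_mul_pow hx₀ hx
  have hnorm : Summable fun m => ‖(m.centralBinom : ℝ) * x ^ m‖ :=
    hs.congr fun m => (Real.norm_of_nonneg (by positivity)).symm
  have hconv : ∀ n, ∑ p ∈ antidiagonal n,
      (p.1.centralBinom : ℝ) * x ^ p.1 * ((p.2.centralBinom : ℝ) * x ^ p.2) = (4 * x) ^ n := by
    intro n
    rw [mul_pow, ← Nat.cast_ofNat, ← Nat.cast_pow,
      ← Nat.sum_antidiagonal_centralBinom_mul_centralBinom, Nat.cast_sum, sum_mul]
    refine sum_congr rfl fun p hp => ?_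
    rw [← mem_antidiagonal.mp hp, pow_add]
    push_cast
    ring
  have hsq : (∑' m, (m.centralBinom : ℝ) * x ^ m) * ∑' m, (m.centralBinom : ℝ) * x ^ m
      = (1 - 4 * x)⁻¹ := by
    rw [tsum_mul_tsum_eq_tsum_sum_antidiagonal_of_summable_norm hnorm hnorm, tsum_congr hconv,
      tsum_geometric_of_lt_one (by positivity) (by linarith)]
  convert hs.hasSum
  rw [← Real.sqrt_inv, ← hsq, Real.sqrt_mul_self (tsum_nonneg fun m => by positivity)]

theorem hasSum_mul_centralBinom_mul_pow (hx₀ : 0 ≤ x) (hx : x < 1 / 4) :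
    HasSum (fun m : ℕ => m * (m.centralBinom : ℝ) * x ^ m)
      (2 * x * (√(1 - 4 * x))⁻¹ / (1 - 4 * x)) := by
  have hs : Summable fun m : ℕ => m * (m.centralBinom : ℝ) * x ^ m := by
    refine (hasSum_coe_mul_geometric_of_norm_lt_one (r := 4 * x)
      (by rw [Real.norm_of_nonneg (by positivity)]; linarith)).summable.of_nonneg_of_le
      (fun m => by positivity) fun m => ?_
    rw [mul_assoc, mul_pow]
    gcongr
    exact_mod_cast m.centralBinom_le_four_pow
  have hA := hasSum_centralBinom_mul_pow hx₀ hx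
  obtain ⟨B, hB⟩ := hs
  have hstep : ∀ m : ℕ, ((m + 1 : ℕ) : ℝ) * ((m + 1).centralBinom : ℝ) * x ^ (m + 1)
      = 4 * x * (m * (m.centralBinom : ℝ) * x ^ m) + 2 * x * ((m.centralBinom : ℝ) * x ^ m) := by
    intro m
    have h := congrArg (Nat.cast : ℕ → ℝ) (Nat.succ_mul_centralBinom_succ m)
    push_cast at h ⊢
    rw [h, pow_succ]
    ring
  have hshift := (hasSum_nat_add_iff' 1).mpr hB
  simp only [hstep, sum_range_one, Nat.cast_zero, zero_mul, sub_zero] at hshift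
  have hrec : B = 4 * x * B + 2 * x * (√(1 - 4 * x))⁻¹ :=
    hshift.unique ((hB.mul_left _).add (hA.mul_left _))
  convert hB using 1
  rw [div_eq_iff (by linarith)]
  linarith

end CentralBinomSeries

theorem hasSum_ceilHalf_mul_choose_mul_third_pow :
    HasSum (fun n : ℕ => (((n + 1) / 2 : ℕ) : ℝ) * n.choose ((n + 1) / 2) * (1 / 3) ^ (n + 1))
      (√5 / 5) := by
  have hB : HasSum (fun m : ℕ => m * (m.centralBinom : ℝ) * (1 / 9) ^ m) (6 * √5 / 25) := by
    convert hasSum_mul_centralBinom_mul_pow (x := 1 / 9) (by norm_num) (by norm_num) using 1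
    have h5 : √(1 - 4 * (1 / 9) : ℝ) = √5 / 3 := by
      rw [Real.sqrt_eq_iff_mul_self_eq_of_pos (by positivity), div_mul_div_comm,
        Real.mul_self_sqrt (by norm_num)]
      norm_num
    have : (0 : ℝ) < √5 := by positivity
    rw [h5]
    field_simp
    norm_num
  have hB' := (hasSum_nat_add_iff' 1).mpr hB
  simp only [sum_range_one, Nat.cast_zero, zero_mul, sub_zero] at hB'
  let d : ℕ → ℝ := fun n => (((n + 1) / 2 : ℕ) : ℝ) * n.choose ((n + 1) / 2) * (1 / 3) ^ (n + 1)
  have heven : HasSum (fun k => d (2 * k)) (1 / 3 * (6 * √5 / 25)) := by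
    refine (hB.mul_left (1 / 3)).congr_fun fun k => ?_
    simp only [d, show (2 * k + 1) / 2 = k by omega, Nat.centralBinom_eq_two_mul_choose]
    rw [pow_succ, pow_mul]
    ring
  have hodd : HasSum (fun k => d (2 * k + 1)) (1 / 2 * (6 * √5 / 25)) := by
    refine (hB'.mul_left (1 / 2)).congr_fun fun k => ?_
    simp only [d, show (2 * k + 1 + 1) / 2 = k + 1 by omega,
      ← Nat.two_mul_choose_succ_eq_centralBinom]
    rw [show 2 * k + 1 + 1 = 2 * (k + 1) by ring, pow_mul]
    push_cast
    ring
  convert heven.even_add_odd hodd using 1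
  ring

theorem sum_range_max_mul_choose_mul_half_pow_mul (n : ℕ) :
    (∑ i ∈ range (n + 1), ((max i (n - i) : ℕ) : ℝ) * (n.choose i : ℝ) * (1 / 2) ^ n)
        * ((1 / 3) * (2 / 3) ^ n)
      = 1 / 6 * (n * (2 / 3) ^ n)
        + (((n + 1) / 2 : ℕ) : ℝ) * n.choose ((n + 1) / 2) * (1 / 3) ^ (n + 1) := by
  have h := congrArg (Nat.cast : ℕ → ℝ) (Nat.two_mul_sum_range_max_mul_choose n)
  simp only [Nat.cast_mul, Nat.cast_sum, Nat.cast_add, Nat.cast_pow, Nat.cast_ofNat] at h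
  rw [← sum_mul]
  generalize ∑ i ∈ range (n + 1), ((max i (n - i) : ℕ) : ℝ) * (n.choose i : ℝ) = S at h ⊢
  simp only [div_pow, one_pow, pow_succ]
  field_simp
  linear_combination 3 * h

/-- The expected run length of consecutive empty center sites in the
three-site parking model with screening equals `1 + √5/5`. -/
theorem expected_run_length :
    HasSum
      (fun n : ℕ =>
        (∑ i ∈ Finset.range (n + 1),
            ((max i (n - i) : ℕ) : ℝ) * (n.choose i : ℝ) * (1/2) ^ n)
          * ((1/3) * (2/3) ^ n))
      (1 + Real.sqrt 5 / 5) := by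
  have hgeom : HasSum (fun n : ℕ => 1 / 6 * (n * (2 / 3 : ℝ) ^ n)) 1 := by
    have h := (hasSum_coe_mul_geometric_of_norm_lt_one (r := (2 / 3 : ℝ)) (by norm_num)).mul_left
      (1 / 6)
    rwa [show (1 / 6 : ℝ) * (2 / 3 / (1 - 2 / 3) ^ 2) = 1 by norm_num] at h
  simpa only [sum_range_max_mul_choose_mul_half_pow_mul] using
    hgeom.add hasSum_ceilHalf_mul_choose_mul_third_pow
end

section
/- Let q(d) = (2/3)·∑_{k=0}^{d−2} binom(d−1+k, k)·(1/3)^{d−1+k} + binom(2d−2, d−1)·(1/3)^{2d−1} for integers d ≥ 1 (with the first sum empty when d = 1), and for r ≥ 1 and t ≥ 0 define ρ(r, t) = ∑_{i=1}^{r} ∑_{(d_1,…,d_i) ∈ (ℤ≥1)^i, d_1+⋯+d_i = r} (∏_{j=1}^{i} q(d_j))·(1 − e^{-t}·∑_{l=0}^{i} t^l / l!). Then for all real t ≥ 0, ρ(3, t) = 11/27 − (11/27 + (11/27)·t + (19/81)·t²/2! + (1/27)·t³/3!)·e^{-t}. -/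
/-!
Grouping the compositions of `3` by their number of parts, the weights are
`q(3) = 14/81` for `(3)`, `2 q(1) q(2) = 16/81` for `(1,2), (2,1)` and `q(1)³ = 1/27`
for `(1,1,1)`. They sum to `11/27`, and the coefficient of `t^l/l!` in front of `e^{-t}` is
the total weight of the compositions with at least `l` parts.
-/

/-- `q d` is the probability that the vertical distance between two consecutive
particles deposited at the center site equals `d` (for `d ≥ 1`). -/
noncomputable def parkingGap (d : ℕ) : ℝ :=
  (2/3) * ∑ k ∈ Finset.range (d - 1), ((d - 1 + k).choose k : ℝ) * (1/3) ^ (d - 1 + k)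
    + ((2 * d - 2).choose (d - 1) : ℝ) * (1/3) ^ (2 * d - 1)

/-- `ρ r t` is the time-dependent particle density of the center site at layer
`r` at time `t` (Theorem 1 of the paper): the sum over all compositions
`(d₁, …, dᵢ)` of `r` into `i ≥ 1` positive parts. -/
noncomputable def density (r : ℕ) (t : ℝ) : ℝ :=
  ∑ i ∈ Finset.Icc 1 r,
    ∑ d ∈ (Finset.Nat.antidiagonalTuple i r).filter (fun d => ∀ j, 1 ≤ d j),
      (∏ j, parkingGap (d j)) *
        (1 - Real.exp (-t) * ∑ l ∈ Finset.range (i + 1), t ^ l / (Nat.factorial l))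

open Finset

lemma parkingGap_one : parkingGap 1 = 1/3 := by
  norm_num [parkingGap]

lemma parkingGap_two : parkingGap 2 = 8/27 := by
  norm_num [parkingGap, sum_range_succ]

lemma parkingGap_three : parkingGap 3 = 14/81 := by
  norm_num [parkingGap, sum_range_succ, Nat.choose]

noncomputable def compositionWeight (i r : ℕ) : ℝ :=
  ∑ d ∈ (Nat.antidiagonalTuple i r).filter (fun d => ∀ j, 1 ≤ d j), ∏ j, parkingGap (d j)

lemma density_eq_sum_compositionWeight (r : ℕ) (t : ℝ) :
    density r t = ∑ i ∈ Icc 1 r, compositionWeight i r *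
      (1 - Real.exp (-t) * ∑ l ∈ range (i + 1), t ^ l / (Nat.factorial l)) := by
  simp only [density, compositionWeight, sum_mul]

lemma compositionWeight_one {r : ℕ} (hr : 1 ≤ r) : compositionWeight 1 r = parkingGap r := by
  rw [compositionWeight, Nat.antidiagonalTuple_one, filter_singleton,
    if_pos (by simpa using hr)]
  simp

lemma filter_antidiagonalTuple_self (r : ℕ) :
    (Nat.antidiagonalTuple r r).filter (fun d => ∀ j, 1 ≤ d j) = {fun _ => 1} := by
  ext d
  simp only [mem_filter, Nat.mem_antidiagonalTuple, mem_singleton]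
  constructor
  · rintro ⟨hsum, hpos⟩
    have hsum' : ∑ _ : Fin r, 1 = ∑ j, d j := by simp [hsum]
    funext j
    exact ((sum_eq_sum_iff_of_le fun j _ => hpos j).1 hsum' j (mem_univ j)).symm
  · rintro rfl
    simp

lemma compositionWeight_self (r : ℕ) : compositionWeight r r = parkingGap 1 ^ r := by
  simp [compositionWeight, filter_antidiagonalTuple_self]

lemma compositionWeight_two_three :
    compositionWeight 2 3 = 2 * parkingGap 1 * parkingGap 2 := by
  have hcomp : (Nat.antidiagonalTuple 2 3).filter (fun d => ∀ j, 1 ≤ d j)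
      = {![1, 2], ![2, 1]} := by decide
  rw [compositionWeight, hcomp, sum_pair (by decide)]
  simp only [Fin.prod_univ_two, Matrix.cons_val_zero, Matrix.cons_val_one]
  ring

theorem density_layer_three_general (t : ℝ) :
    density 3 t = 11/27 - (11/27 + (11/27) * t + (19/81) * t^2 / (Nat.factorial 2)
      + (1/27) * t^3 / (Nat.factorial 3)) * Real.exp (-t) := by
  rw [density_eq_sum_compositionWeight, show Icc 1 3 = {1, 2, 3} by rfl,
    sum_insert (by decide), sum_insert (by decide), sum_singleton,
    compositionWeight_one (by norm_num : 1 ≤ 3), compositionWeight_two_three, compositionWeight_self,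
    parkingGap_one, parkingGap_two, parkingGap_three]
  simp only [sum_range_succ, sum_range_zero, Nat.factorial]
  push_cast
  ring

/-- The time-dependent density of the third layer. -/
theorem density_layer_three (t : ℝ) (ht : 0 ≤ t) :
    density 3 t = 11/27 - (11/27 + (11/27) * t + (19/81) * t^2 / (Nat.factorial 2)
      + (1/27) * t^3 / (Nat.factorial 3)) * Real.exp (-t) :=
  density_layer_three_general t
end
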